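/- Let ψ₅ : P → Q be the unique ℂ-algebra homomorphism with ψ₅(ℓ⁽ⁱ⁾) = D_Q^i((t⁽⁰⁾)²) and ψ₅(w⁽ⁱ⁾) = D_Q^i((t⁽⁰⁾)⁵) for all i ≥ 0, and let I₅ ⊆ P be the ideal generated by {Dⁱ((w⁽⁰⁾)² − (ℓ⁽⁰⁾)⁵) : i ≥ 0}. Then the kernel of ψ₅ equals the radical of I₅; equivalently, for p ∈ P one has ψ₅(p) = 0 if and only if pⁿ ∈ I₅ for some n ≥ 1. -/

import Mathlib

open MvPolynomial

noncomputable section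

/-- The polynomial ring `P = ℂ[ℓ⁽⁰⁾, ℓ⁽¹⁾, …, w⁽⁰⁾, w⁽¹⁾, …]`:
variables are indexed by `Fin 2 × ℕ`, where `(0, i)` is `ℓ⁽ⁱ⁾` and `(1, i)` is `w⁽ⁱ⁾`. -/
abbrev P : Type := MvPolynomial (Fin 2 × ℕ) ℂ

/-- The unique ℂ-linear derivation `D : P → P` with `D(ℓ⁽ⁱ⁾) = ℓ⁽ⁱ⁺¹⁾`, `D(w⁽ⁱ⁾) = w⁽ⁱ⁺¹⁾`. -/
def D : Derivation ℂ P P :=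
  MvPolynomial.mkDerivation ℂ (fun p : Fin 2 × ℕ => (X (p.1, p.2 + 1) : P))

/-- `ℓ⁽ⁱ⁾` -/
def lv (i : ℕ) : P := X (0, i)

/-- `w⁽ⁱ⁾` -/
def wv (i : ℕ) : P := X (1, i)

/-- The polynomial ring `Q = ℂ[t⁽⁰⁾, t⁽¹⁾, …]`. -/
abbrev Q : Type := MvPolynomial ℕ ℂ

/-- The unique ℂ-linear derivation `D_Q : Q → Q` with `D_Q(t⁽ⁱ⁾) = t⁽ⁱ⁺¹⁾`. -/
def DQ : Derivation ℂ Q Q :=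
  MvPolynomial.mkDerivation ℂ (fun i : ℕ => (X (i + 1) : Q))

/-- `t⁽⁰⁾` -/
def t : Q := X 0

/-- The ideal `I₅` generated by all `Dⁱ((w⁽⁰⁾)² − (ℓ⁽⁰⁾)⁵)`, `i ≥ 0`. -/
def I₅ : Ideal P := Ideal.span (Set.range fun i : ℕ => (⇑D)^[i] (wv 0 ^ 2 - lv 0 ^ 5))

/-- The ℂ-algebra homomorphism `ψ₅ : P → Q` with `ψ₅(ℓ⁽ⁱ⁾) = D_Q^i((t⁽⁰⁾)²)` and
`ψ₅(w⁽ⁱ⁾) = D_Q^i((t⁽⁰⁾)⁵)`, induced by the parametrization `t ↦ (t², t⁵)`. -/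
def ψ₅ : P →ₐ[ℂ] Q :=
  aeval (fun p : Fin 2 × ℕ => (⇑DQ)^[p.2] (if p.1 = 0 then t ^ 2 else t ^ 5))

/-!
Since `ker ψ₅` is prime and contains `I₅`, it contains `√I₅`. Conversely, in characteristic zero
`J = √I₅` is again a differential ideal, and in a radical differential ideal `a b ∈ J` implies
`(D a) b ∈ J`. After adjoining `y = 1/ℓ⁽⁰⁾`, the substitution `t ↦ w⁽⁰⁾ y²` inverts `ψ₅` modulo `J`
and commutes with the derivations, so `ψ₅ p = 0` gives `(ℓ⁽⁰⁾)ⁿ p ∈ J`, hence `ℓ⁽⁰⁾ p ∈ J`.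
Differentiating gives `ℓ⁽ⁱ⁾ p ∈ J`; from `(w⁽⁰⁾ p)² ≡ (ℓ⁽⁰⁾)⁴ p · ℓ⁽⁰⁾ p` also `w⁽ⁱ⁾ p ∈ J`.
As `p` has no constant term, `p² ∈ J`, so `p ∈ J`.
-/

section DifferentialIdeal

variable {R A : Type*} [CommRing R] [CommRing A] [Algebra R A]

def IsDifferentialIdeal (d : Derivation R A A) (I : Ideal A) : Prop := ∀ a ∈ I, d a ∈ I

variable {d : Derivation R A A}

theorem isDifferentialIdeal_span {S : Set A} (h : ∀ s ∈ S, d s ∈ Ideal.span S) :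
    IsDifferentialIdeal d (Ideal.span S) := by
  intro a ha
  induction ha using Submodule.span_induction with
  | mem x hx => exact h x hx
  | zero => simp
  | add x y _ _ hx hy => rw [map_add]; exact Ideal.add_mem _ hx hy
  | smul r x hx hdx =>
      rw [smul_eq_mul, Derivation.leibniz, smul_eq_mul, smul_eq_mul]
      exact Ideal.add_mem _ (Ideal.mul_mem_left _ _ hdx) (Ideal.mul_mem_right _ _ hx)

namespace IsDifferentialIdeal

variable {I : Ideal A}

theorem pow_mul_pow_mem [Algebra ℚ A] (hI : IsDifferentialIdeal d I) {a : A} {n k : ℕ}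
    (h : a ^ (n + 1) * d a ^ k ∈ I) : a ^ n * d a ^ (k + 2) ∈ I := by
  have hunit : IsUnit ((n + 1 : ℕ) : A) := by
    have hQ : ((n + 1 : ℕ) : ℚ) ≠ 0 := Nat.cast_ne_zero.2 n.succ_ne_zero
    simpa using (isUnit_iff_ne_zero.2 hQ).map (algebraMap ℚ A)
  have hexpand : ((n + 1 : ℕ) : A) * (a ^ n * d a ^ (k + 2)) =
      d a * d (a ^ (n + 1) * d a ^ k) - k * (d (d a) * (a ^ (n + 1) * d a ^ k)) := by
    rw [Derivation.leibniz, Derivation.leibniz_pow, Derivation.leibniz_pow]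
    cases k <;> simp only [smul_eq_mul, nsmul_eq_mul, Nat.add_sub_cancel] <;> push_cast <;> ring
  rw [← Ideal.unit_mul_mem_iff_mem I hunit, hexpand]
  exact I.sub_mem (I.mul_mem_left _ (hI _ h)) (I.mul_mem_left _ (I.mul_mem_left _ h))

theorem radical [Algebra ℚ A] (hI : IsDifferentialIdeal d I) :
    IsDifferentialIdeal d I.radical := by
  have hshift (a : A) (m : ℕ) : ∀ k, a ^ m * d a ^ k ∈ I → d a ^ (k + 2 * m) ∈ I := by
    induction m with
    | zero => simp
    | succ m ih =>
        intro k h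
        simpa [add_assoc, mul_add, add_comm 2] using ih (k + 2) (hI.pow_mul_pow_mem h)
  rintro a ⟨n, hn⟩
  exact ⟨2 * n, by simpa using hshift a n 0 (by simpa using hn)⟩

theorem apply_mul_mem_of_isRadical (hI : IsDifferentialIdeal d I) (hrad : I.IsRadical) {a b : A}
    (h : a * b ∈ I) : d a * b ∈ I := by
  refine hrad ⟨2, ?_⟩
  have heq : (d a * b) ^ 2 = (d a * b) * d (a * b) - (a * b) * (d a * d b) := by
    rw [Derivation.leibniz, smul_eq_mul, smul_eq_mul]; ring
  rw [heq]
  exact I.sub_mem (I.mul_mem_left _ (hI _ h)) (I.mul_mem_right _ h)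

theorem iterate_apply_mul_mem_of_isRadical (hI : IsDifferentialIdeal d I) (hrad : I.IsRadical)
    {a b : A} (h : a * b ∈ I) (n : ℕ) : d^[n] a * b ∈ I := by
  induction n with
  | zero => exact h
  | succ n ih => rw [Function.iterate_succ_apply']; exact hI.apply_mul_mem_of_isRadical hrad ih

def quotientDerivation (hI : IsDifferentialIdeal d I) : Derivation R (A ⧸ I) (A ⧸ I) where
  toLinearMap := (Submodule.Quotient.restrictScalarsEquiv R I).toLinearMap ∘ₗ
      (I.restrictScalars R).mapQ (I.restrictScalars R) d.toLinearMap hI ∘ₗ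
      (Submodule.Quotient.restrictScalarsEquiv R I).symm.toLinearMap
  map_one_eq_zero' := by
    change Ideal.Quotient.mk I (d 1) = 0
    simp
  leibniz' := by
    rintro ⟨a⟩ ⟨b⟩
    change Ideal.Quotient.mk I (d (a * b)) =
      Ideal.Quotient.mk I a • Ideal.Quotient.mk I (d b) +
        Ideal.Quotient.mk I b • Ideal.Quotient.mk I (d a)
    simp [Derivation.leibniz]

theorem quotientDerivation_mk (hI : IsDifferentialIdeal d I) (a : A) :
    hI.quotientDerivation (Ideal.Quotient.mk I a) = Ideal.Quotient.mk I (d a) :=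
  rfl

end IsDifferentialIdeal

end DifferentialIdeal

namespace MvPolynomial

variable {R σ : Type*} [CommRing R]

theorem algHom_derivation_comm {B : Type*} [CommRing B] [Algebra R B]
    (f : MvPolynomial σ R →ₐ[R] B) {d₁ : Derivation R (MvPolynomial σ R) (MvPolynomial σ R)}
    {d₂ : Derivation R B B} (h : ∀ i, f (d₁ (X i)) = d₂ (f (X i))) (p : MvPolynomial σ R) :
    f (d₁ p) = d₂ (f p) := by
  induction p using MvPolynomial.induction_on with
  | C a => simp only [← algebraMap_eq, Derivation.map_algebraMap, map_zero, AlgHom.commutes]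
  | add p q hp hq => simp only [map_add, hp, hq]
  | mul_X p i hp => simp only [Derivation.leibniz, smul_eq_mul, map_add, map_mul, hp, h]

theorem constantCoeff_aeval {τ : Type*} {g : σ → MvPolynomial τ R}
    (hg : ∀ i, constantCoeff (g i) = 0) (p : MvPolynomial σ R) :
    constantCoeff (aeval g p) = constantCoeff p := by
  induction p using MvPolynomial.induction_on with
  | C a => simp
  | add p q hp hq => simp only [map_add, hp, hq]
  | mul_X p i hp => simp [hg]

theorem constantCoeff_mkDerivation_eq_zero {f : σ → MvPolynomial σ R}
    (hf : ∀ i, constantCoeff (f i) = 0) (p : MvPolynomial σ R) :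
    constantCoeff (mkDerivation R f p) = 0 := by
  induction p using MvPolynomial.induction_on with
  | C a => simp [← algebraMap_eq]
  | add p q hp hq => simp [hp, hq]
  | mul_X p i hp => simp [Derivation.leibniz, hp, hf]

theorem mem_idealOfVars_iff {p : MvPolynomial σ R} :
    p ∈ idealOfVars σ R ↔ constantCoeff p = 0 := by
  simpa [constantCoeff_eq, Nat.lt_one_iff, Finsupp.degree_eq_zero_iff]
    using mem_pow_idealOfVars_iff' 1 p

theorem mem_of_forall_X_mul_mem {J : Ideal (MvPolynomial σ R)} (hJ : J.IsRadical)
    {p : MvPolynomial σ R} (hp : constantCoeff p = 0) (h : ∀ i, X i * p ∈ J) : p ∈ J := by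
  have hvars : idealOfVars σ R ≤ J.colon {p} := by
    rw [idealOfVars, Ideal.span_le, Set.range_subset_iff]
    exact fun i => Submodule.mem_colon_singleton.2 (h i)
  have hsq := Submodule.mem_colon_singleton.1 (hvars (mem_idealOfVars_iff.2 hp))
  exact hJ ⟨2, by rwa [pow_two]⟩

theorem exists_pow_mul_mem_of_rename_mem {J : Ideal (MvPolynomial σ R)}
    {s p : MvPolynomial σ R} (h : rename some p ∈
      Ideal.span (rename some '' (J : Set (MvPolynomial σ R)) ∪ {X none * rename some s - 1})) :
    ∃ n, s ^ n * p ∈ J := by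
  let e : MvPolynomial (Option σ) R →ₐ[R] Localization.Away s :=
    aeval fun o => o.elim (IsLocalization.Away.invSelf s)
      fun i => algebraMap (MvPolynomial σ R) _ (X i)
  have he (q : MvPolynomial σ R) : e (rename some q) = algebraMap _ _ q := by
    suffices e.comp (rename some) = IsScalarTower.toAlgHom R _ _ from DFunLike.congr_fun this q
    ext i
    simp [e]
  have hmap : Ideal.map e (Ideal.span (rename some '' (J : Set (MvPolynomial σ R)) ∪
      {X none * rename some s - 1})) ≤ J.map (algebraMap _ (Localization.Away s)) := by
    rw [Ideal.map_span, Ideal.span_le]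
    rintro _ ⟨q, ⟨j, hj, rfl⟩ | rfl, rfl⟩
    · rw [he]
      exact Ideal.mem_map_of_mem _ hj
    · simp only [map_sub, map_mul, map_one, he, e, aeval_X, Option.elim_none]
      rw [mul_comm, IsLocalization.Away.mul_invSelf, sub_self]
      exact zero_mem _
  obtain ⟨_, ⟨n, rfl⟩, hn⟩ := (IsLocalization.algebraMap_mem_map_algebraMap_iff
    (Submonoid.powers s) (Localization.Away s) J p).1 (he p ▸ hmap (Ideal.mem_map_of_mem e h))
  exact ⟨n, hn⟩

end MvPolynomial

theorem D_X (v : Fin 2 × ℕ) : D (X v) = X (v.1, v.2 + 1) :=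
  mkDerivation_X _ _ v

theorem iterate_D_X (j : Fin 2) (i : ℕ) : (⇑D)^[i] (X (j, 0)) = X (j, i) := by
  induction i with
  | zero => rfl
  | succ i ih => rw [Function.iterate_succ_apply', ih, D_X]

theorem DQ_X (i : ℕ) : DQ (X i) = X (i + 1) :=
  mkDerivation_X _ _ i

theorem ψ₅_X (v : Fin 2 × ℕ) :
    ψ₅ (X v) = (⇑DQ)^[v.2] (if v.1 = 0 then t ^ 2 else t ^ 5) :=
  aeval_X _ v

theorem ψ₅_D (p : P) : ψ₅ (D p) = DQ (ψ₅ p) :=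
  algHom_derivation_comm ψ₅ (fun v => by rw [D_X, ψ₅_X, ψ₅_X, Function.iterate_succ_apply']) p

theorem constantCoeff_ψ₅ (p : P) : constantCoeff (ψ₅ p) = constantCoeff p := by
  refine constantCoeff_aeval (fun v => ?_) p
  rcases v with ⟨j, _ | i⟩
  · split_ifs <;> simp [t]
  · rw [Function.iterate_succ_apply']
    exact constantCoeff_mkDerivation_eq_zero (fun _ => constantCoeff_X _ _) _

theorem I₅_le_ker_ψ₅ : I₅ ≤ RingHom.ker ψ₅ := by
  rw [I₅, Ideal.span_le, Set.range_subset_iff]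
  intro i
  rw [SetLike.mem_coe, RingHom.mem_ker]
  induction i with
  | zero => simp [lv, wv, ψ₅_X, ← pow_mul]
  | succ i ih => rw [Function.iterate_succ_apply', ψ₅_D, ih, map_zero]

theorem isDifferentialIdeal_I₅ : IsDifferentialIdeal D I₅ :=
  isDifferentialIdeal_span <| by
    rintro _ ⟨i, rfl⟩
    exact Ideal.subset_span ⟨i + 1, Function.iterate_succ_apply' _ _ _⟩

theorem mem_radical_I₅_of_lv_mul_mem {p : P} (hp : constantCoeff p = 0)
    (h : lv 0 * p ∈ I₅.radical) : p ∈ I₅.radical := by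
  have hJ := isDifferentialIdeal_I₅.radical
  have hrad := I₅.radical_isRadical
  have hw : wv 0 * p ∈ I₅.radical := by
    refine hrad ⟨2, ?_⟩
    rw [show (wv 0 * p) ^ 2 = (wv 0 ^ 2 - lv 0 ^ 5) * p ^ 2 + lv 0 ^ 4 * p * (lv 0 * p) by ring]
    exact Ideal.add_mem _ (Ideal.mul_mem_right _ _ (Ideal.le_radical (Ideal.subset_span ⟨0, rfl⟩)))
      (Ideal.mul_mem_left _ _ h)
  refine mem_of_forall_X_mul_mem hrad hp ?_
  rintro ⟨j, i⟩
  rw [← iterate_D_X]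
  fin_cases j
  · exact hJ.iterate_apply_mul_mem_of_isRadical hrad h i
  · exact hJ.iterate_apply_mul_mem_of_isRadical hrad hw i

abbrev P' : Type := MvPolynomial (Option (Fin 2 × ℕ)) ℂ

def ι : P →ₐ[ℂ] P' := rename some

def y : P' := X none

/-- The extension of `D` to `P' = P[y]` in which `y` behaves like `1 / ℓ⁽⁰⁾`. -/
def D' : Derivation ℂ P' P' :=
  mkDerivation ℂ fun o => o.elim (-(y ^ 2 * ι (lv 1))) fun v => X (some (v.1, v.2 + 1))

theorem D'_y : D' y = -(y ^ 2 * ι (lv 1)) :=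
  mkDerivation_X _ _ none

theorem ι_D (p : P) : ι (D p) = D' (ι p) :=
  algHom_derivation_comm ι (fun v => by simp [ι, D_X, D', mkDerivation_X]) p

def K : Ideal P' := Ideal.span (ι '' (I₅.radical : Set P) ∪ {y * ι (lv 0) - 1})

theorem isDifferentialIdeal_K : IsDifferentialIdeal D' K := by
  refine isDifferentialIdeal_span ?_
  rintro _ (⟨j, hj, rfl⟩ | rfl)
  · rw [← ι_D]
    exact Ideal.subset_span (Or.inl ⟨_, isDifferentialIdeal_I₅.radical j hj, rfl⟩)
  · have hDl0 : D' (ι (lv 0)) = ι (lv 1) := by rw [← ι_D, lv, D_X]; rfl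
    rw [show D' (y * ι (lv 0) - 1) = -(y * ι (lv 1)) * (y * ι (lv 0) - 1) by
      rw [map_sub, Derivation.leibniz, Derivation.map_one_eq_zero, smul_eq_mul, smul_eq_mul, D'_y,
        hDl0]
      ring]
    exact Ideal.mul_mem_left _ _ (Ideal.subset_span (Or.inr rfl))

/-- The inverse `t ↦ w⁽⁰⁾ / (ℓ⁽⁰⁾)²` of the parametrization `t ↦ (t², t⁵)`, modulo `K`. -/
def φ : Q →ₐ[ℂ] P' ⧸ K :=
  aeval fun i => Ideal.Quotient.mk K ((⇑D')^[i] (ι (wv 0) * y ^ 2))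

theorem φ_DQ (q : Q) : φ (DQ q) = isDifferentialIdeal_K.quotientDerivation (φ q) :=
  algHom_derivation_comm φ (fun i => by
    rw [DQ_X, φ, aeval_X, aeval_X, IsDifferentialIdeal.quotientDerivation_mk,
      Function.iterate_succ_apply']) q

theorem φ_ψ₅_X_zero (j : Fin 2) : φ (ψ₅ (X (j, 0))) = Ideal.Quotient.mk K (ι (X (j, 0))) := by
  set Y := Ideal.Quotient.mk K y
  set L := Ideal.Quotient.mk K (ι (lv 0))
  set W := Ideal.Quotient.mk K (ι (wv 0))
  have hYL : Y * L = 1 := by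
    have := Ideal.Quotient.eq_zero_iff_mem.2 (Ideal.subset_span (Or.inr rfl) : y * ι (lv 0) - 1 ∈ K)
    rwa [map_sub, map_mul, map_one, sub_eq_zero] at this
  have hWL : W ^ 2 = L ^ 5 := by
    have := Ideal.Quotient.eq_zero_iff_mem.2 (Ideal.subset_span (Or.inl
      ⟨_, Ideal.le_radical (Ideal.subset_span ⟨0, rfl⟩), rfl⟩) : ι (wv 0 ^ 2 - lv 0 ^ 5) ∈ K)
    rwa [map_sub, map_pow, map_pow, map_sub, map_pow, map_pow, sub_eq_zero] at this
  have hφt : φ t = W * Y ^ 2 := by simp [φ, t, W, Y]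
  have hl : φ (t ^ 2) = L :=
    calc φ (t ^ 2) = W ^ 2 * Y ^ 4 := by rw [map_pow, hφt]; ring
      _ = L * (Y * L) ^ 4 := by rw [hWL]; ring
      _ = L := by rw [hYL, one_pow, mul_one]
  have hw : φ (t ^ 5) = W :=
    calc φ (t ^ 5) = W * (W ^ 2) ^ 2 * Y ^ 10 := by rw [map_pow, hφt]; ring
      _ = W * (Y * L) ^ 10 := by rw [hWL]; ring
      _ = W := by rw [hYL, one_pow, mul_one]
  rw [ψ₅_X]
  fin_cases j
  · exact hl
  · exact hw

theorem φ_ψ₅ (p : P) : φ (ψ₅ p) = Ideal.Quotient.mk K (ι p) := by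
  suffices φ.comp ψ₅ = (Ideal.Quotient.mkₐ ℂ K).comp ι from DFunLike.congr_fun this p
  ext ⟨j, i⟩
  simp only [AlgHom.comp_apply, Ideal.Quotient.mkₐ_eq_mk]
  rw [← iterate_D_X]
  induction i with
  | zero => exact φ_ψ₅_X_zero j
  | succ i ih =>
      rw [Function.iterate_succ_apply', ψ₅_D, φ_DQ, ih,
        IsDifferentialIdeal.quotientDerivation_mk, ι_D]

theorem mem_radical_of_ψ₅_eq_zero {p : P} (hp : ψ₅ p = 0) : p ∈ I₅.radical := by
  have hK : ι p ∈ K := by rw [← Ideal.Quotient.eq_zero_iff_mem, ← φ_ψ₅, hp, map_zero]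
  obtain ⟨n, hn⟩ := exists_pow_mul_mem_of_rename_mem hK
  refine mem_radical_I₅_of_lv_mul_mem (by rw [← constantCoeff_ψ₅, hp, map_zero]) ?_
  refine I₅.radical_isRadical ⟨n + 1, ?_⟩
  rw [show (lv 0 * p) ^ (n + 1) = lv 0 ^ n * p * (lv 0 * p ^ n) by ring]
  exact Ideal.mul_mem_right _ _ hn

theorem ker_ψ₅_eq_radical :
    RingHom.ker ψ₅ = I₅.radical ∧ ∀ p : P, ψ₅ p = 0 ↔ ∃ n : ℕ, 1 ≤ n ∧ p ^ n ∈ I₅ := by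
  have hker : RingHom.ker ψ₅ = I₅.radical :=
    le_antisymm (fun _ hp => mem_radical_of_ψ₅_eq_zero hp)
      ((RingHom.ker_isPrime ψ₅).radical_le_iff.2 I₅_le_ker_ψ₅)
  refine ⟨hker, fun p => ?_⟩
  rw [← RingHom.mem_ker, hker]
  constructor
  · rintro ⟨n, hn⟩
    exact ⟨n + 1, n.succ_pos, by rw [pow_succ']; exact I₅.mul_mem_left p hn⟩
  · rintro ⟨n, -, hn⟩
    exact ⟨n, hn⟩
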